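/- The rank of the 2×2 polynomial matrix A(ξ) = diag(πξ₂ − ξ₁, πξ₁ − ξ₂) is 2 at every point of ℤ² \ {0}, but equals 1 at the point ξ = (π, 1) ∈ ℝ². Hence having constant rank on ℤ^d \ {0} does not imply constant rank on ℝ^d \ {0}. -/

import Mathlib

open Matrix Real

theorem Irrational.mul_intCast_sub_intCast_ne_zero {x : ℝ} (hx : Irrational x) {a b : ℤ}
    (hab : a ≠ 0 ∨ b ≠ 0) : x * b - a ≠ 0 := by
  rcases eq_or_ne b 0 with rfl | hb
  · simpa using hab
  · exact ((hx.mul_intCast hb).sub_intCast a).ne_zero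

theorem Matrix.rank_of_fin_two_diag {K : Type*} [Field K] [DecidableEq K] (a b : K) :
    (!![a, 0; 0, b]).rank = (if a ≠ 0 then 1 else 0) + (if b ≠ 0 then 1 else 0) := by
  rw [← diagonal_vec2, rank_diagonal, Fintype.card_subtype, Finset.card_filter, Fin.sum_univ_two]
  rfl

/-- The 2×2 polynomial matrix `A(ξ) = diag(πξ₂ − ξ₁, πξ₁ − ξ₂)` has
rank `2` at every point of `ℤ² \ {0}`, but rank `1` at `ξ = (π, 1) ∈ ℝ²`. Hence
constant rank on `ℤ^d \ {0}` does not imply constant rank on `ℝ^d \ {0}`. -/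
theorem stmt18 :
    (∀ m : ℤ × ℤ, m ≠ 0 →
      (!![Real.pi * (m.2 : ℝ) - (m.1 : ℝ), 0; 0, Real.pi * (m.1 : ℝ) - (m.2 : ℝ)] :
        Matrix (Fin 2) (Fin 2) ℝ).rank = 2) ∧
    (!![Real.pi * (1 : ℝ) - Real.pi, 0; 0, Real.pi * Real.pi - 1] :
        Matrix (Fin 2) (Fin 2) ℝ).rank = 1 := by
  refine ⟨fun m hm => ?_, ?_⟩
  · have hm' : m.1 ≠ 0 ∨ m.2 ≠ 0 := by
      contrapose! hm
      exact Prod.ext hm.1 hm.2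
    rw [rank_of_fin_two_diag,
      if_pos (irrational_pi.mul_intCast_sub_intCast_ne_zero hm'),
      if_pos (irrational_pi.mul_intCast_sub_intCast_ne_zero hm'.symm)]
  · have hpi_sq : π * π - 1 ≠ 0 := by nlinarith [pi_gt_three]
    rw [rank_of_fin_two_diag, mul_one, sub_self, if_neg (not_not.mpr rfl), if_pos hpi_sq]
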